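/- arXiv:2511.14736 — 4 statements merged into one kernel-verified Lean document; each statement's English description precedes it below -/
import Mathlib

section
/- Let x, T > 0 and y₀ ≤ −T/π, and set ω₀ = e^{(2π/T)·y₀}·x. Then ({ω₀}/ω₀)/((T/(2π))·log(ω₀/x))² + Σ_{n ≤ ω₀} (1/n)/((T/(2π))·log(n/x))² ≤ 2π/(T·|y₀|), where {ω₀} denotes the fractional part of ω₀ and the sum runs over positive integers n ≤ ω₀. -/
open Real


lemma my_pade (w : ℝ) (hw : 0 ≤ w) : 2*w/(2+w) ≤ Real.log (1+w) := by
  have hd : ∀ z : ℝ, 0 ≤ z → HasDerivAt (fun w : ℝ => Real.log (1+w) - 2*w/(2+w))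
      (1/(1+z) - 4/(2+z)^2) z := by
    intro z hz
    have h1 : HasDerivAt (fun w : ℝ => 1 + w) 1 z := by
      simpa using (hasDerivAt_id z).const_add 1
    have h2 := h1.log (by positivity)
    have h3 : HasDerivAt (fun w : ℝ => 2*w) 2 z := by
      simpa using (hasDerivAt_id z).const_mul 2
    have h4 : HasDerivAt (fun w : ℝ => 2 + w) 1 z := by
      simpa using (hasDerivAt_id z).const_add 2
    have h5 := h3.div h4 (by positivity)
    have he : (2*(2+z) - 2*z*1)/(2+z)^2 = 4/(2+z)^2 := by
      congr 1; ring
    rw [he] at h5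
    exact h2.sub h5
  have hmono : MonotoneOn (fun w : ℝ => Real.log (1+w) - 2*w/(2+w)) (Set.Ici 0) := by
    apply monotoneOn_of_deriv_nonneg (convex_Ici 0)
    · exact fun z hz => ((hd z hz).continuousAt).continuousWithinAt
    · intro z hz
      rw [interior_Ici] at hz
      exact ((hd z (le_of_lt hz)).differentiableAt).differentiableWithinAt
    · intro z hz
      rw [interior_Ici] at hz
      have hz' : (0:ℝ) < z := hz
      rw [(hd z (le_of_lt hz)).deriv]
      rw [sub_nonneg, div_le_div_iff₀ (by positivity : (0:ℝ) < (2+z)^2) (by linarith : (0:ℝ) < 1+z)]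
      nlinarith [sq_nonneg z]
  have h := hmono Set.self_mem_Ici (Set.mem_Ici.mpr hw) hw
  simp only [mul_zero, zero_div, add_zero, Real.log_one] at h
  linarith



lemma my_log_ge (u v : ℝ) (hu : 0 < u) (huv : u ≤ v) :
    2*(v-u)/(u+v) ≤ Real.log v - Real.log u := by
  have hv : 0 < v := lt_of_lt_of_le hu huv
  have hu0 : u ≠ 0 := hu.ne'
  have huv0 : u + v ≠ 0 := by positivity
  have h := my_pade ((v-u)/u) (div_nonneg (by linarith) hu.le)
  have h1 : (1:ℝ) + (v-u)/u = v/u := by field_simp; ring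
  rw [h1, Real.log_div (ne_of_gt hv) hu0] at h
  have he : 2+(v-u)/u = (u+v)/u := by
    rw [eq_div_iff hu0, add_mul, div_mul_cancel₀ _ hu0]; ring
  have hd : (0:ℝ) < 2+(v-u)/u := by
    rw [he]; positivity
  have h2 : 2*((v-u)/u)/(2+(v-u)/u) = 2*(v-u)/(u+v) := by
    rw [div_eq_div_iff hd.ne' (by positivity : (u+v) ≠ 0), he]
    field_simp
  linarith [h2 ▸ h]

lemma my_key (a L u v : ℝ) (hu : 0 < u) (huv : u ≤ v) (ha : 2 ≤ a)
    (hL : 2*(v-u)/(u+v) ≤ L) :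
    (v-u)/(v*a^2) ≤ 1/a - 1/(a+L) := by
  have hv : 0 < v := lt_of_lt_of_le hu huv
  have hL0 : 0 ≤ L := le_trans (div_nonneg (by linarith) (by linarith)) hL
  have h2 : 2*(v-u) ≤ L*(u+v) := by
    rw [div_le_iff₀ (by linarith : (0:ℝ) < u+v)] at hL; linarith
  have h3 : L*(v-u) ≤ 2*(v*L - (v-u)) := by nlinarith
  have h5 : 0 ≤ v*L - (v-u) := by nlinarith [mul_nonneg hL0 (by linarith : (0:ℝ) ≤ v-u)]
  have h6 : 2*(v*L-(v-u)) ≤ a*(v*L-(v-u)) := mul_le_mul_of_nonneg_right ha h5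
  have h4 : (v-u)*(a+L) ≤ v*a*L := by nlinarith
  have ha0 : 0 < a := by linarith
  have hb0 : 0 < a + L := by linarith
  rw [div_sub_div _ _ (ne_of_gt ha0) (ne_of_gt hb0), div_le_div_iff₀ (by positivity) (by positivity)]
  nlinarith [mul_le_mul_of_nonneg_left h4 ha0.le]

lemma my_sum (x c : ℝ) (hc : 0 < c) (N : ℕ) (hN : 1 ≤ N)
    (hlog : 2 ≤ Real.log x - Real.log (N:ℝ)) :
    ∑ n ∈ Finset.Icc 1 N, (1/(n:ℝ))/(c^2*(Real.log x - Real.log (n:ℝ))^2)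
      ≤ 1/(c^2*(Real.log x - Real.log (N:ℝ))) := by
  induction N with
  | zero => omega
  | succ N ih =>
    by_cases hN0 : N = 0
    · subst hN0
      have h2 : 2 ≤ Real.log x := by simpa using hlog
      norm_num
      have hxx : (Real.log x^2)⁻¹ ≤ (Real.log x)⁻¹ := by
        apply inv_anti₀ (by linarith)
        nlinarith
      exact mul_le_mul_of_nonneg_right hxx (by positivity)
    · have hN1 : 1 ≤ N := Nat.one_le_iff_ne_zero.mpr hN0
      have hNpos : (0:ℝ) < (N:ℝ) := by exact_mod_cast Nat.pos_of_ne_zero hN0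
      have hcast : ((N+1 : ℕ) : ℝ) = (N:ℝ) + 1 := by push_cast; ring
      rw [hcast] at hlog
      have hmonolog : Real.log (N:ℝ) ≤ Real.log ((N:ℝ)+1) :=
        Real.log_le_log (by positivity) (by linarith)
      have hlogN : 2 ≤ Real.log x - Real.log (N:ℝ) := by linarith
      have hsum := ih hN1 hlogN
      rw [Finset.sum_Icc_succ_top (by omega : 1 ≤ N+1)]
      set A := Real.log x - Real.log ((N:ℝ)+1) with hA
      set B := Real.log x - Real.log (N:ℝ) with hB
      have hL := my_log_ge (N:ℝ) ((N:ℝ)+1) hNpos (by linarith)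
      have hkey := my_key A (Real.log ((N:ℝ)+1) - Real.log (N:ℝ)) (N:ℝ) ((N:ℝ)+1)
        hNpos (by linarith) hlog hL
      have hABe : A + (Real.log ((N:ℝ)+1) - Real.log (N:ℝ)) = B := by rw [hA, hB]; ring
      rw [hABe] at hkey
      have hsimp : ((N:ℝ)+1) - (N:ℝ) = 1 := by ring
      rw [hsimp] at hkey
      have hA0 : 0 < A := by linarith
      have hB0 : 0 < B := by linarith
      have hc0 : c ≠ 0 := hc.ne'
      have hA0' : A ≠ 0 := hA0.ne'
      have hB0' : B ≠ 0 := hB0.ne'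
      have hN1' : (N:ℝ)+1 ≠ 0 := by positivity
      have hstep : (1/((N:ℝ)+1))/(c^2*A^2) ≤ 1/(c^2*A) - 1/(c^2*B) := by
        have h := mul_le_mul_of_nonneg_left hkey (by positivity : (0:ℝ) ≤ 1/c^2)
        have e1 : (1/((N:ℝ)+1))/(c^2*A^2) = 1/c^2 * (1/(((N:ℝ)+1)*A^2)) := by
          field_simp
        have e2 : 1/c^2 * (1/A - 1/B) = 1/(c^2*A) - 1/(c^2*B) := by
          field_simp
        rw [e1, ← e2]
        exact h
      rw [hcast]
      calc (∑ n ∈ Finset.Icc 1 N, (1/(n:ℝ))/(c^2*(Real.log x - Real.log (n:ℝ))^2))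
            + (1/((N:ℝ)+1))/(c^2*(Real.log x - Real.log ((N:ℝ)+1))^2)
          ≤ 1/(c^2*B) + ((1/(c^2*A)) - 1/(c^2*B)) := add_le_add hsum hstep
        _ = 1/(c^2*A) := by ring

/-- Tail bound: for `x, T > 0`, `y₀ ≤ -T/π` and `ω₀ = e^{(2π/T)y₀}·x`, one has
`({ω₀}/ω₀)/((T/2π)·log(ω₀/x))² + ∑_{n ≤ ω₀} (1/n)/((T/2π)·log(n/x))² ≤ 2π/(T|y₀|)`. -/
theorem tail_log_sum_bound (x T y₀ ω₀ : ℝ) (hx : 0 < x) (hT : 0 < T)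
    (hy₀ : y₀ ≤ -T / π) (hω₀ : ω₀ = Real.exp (2 * π / T * y₀) * x) :
    (Int.fract ω₀ / ω₀) / ((T / (2 * π)) * Real.log (ω₀ / x)) ^ 2
      + ∑ n ∈ Finset.Icc 1 ⌊ω₀⌋₊,
          (1 / (n : ℝ)) / ((T / (2 * π)) * Real.log ((n : ℝ) / x)) ^ 2
      ≤ 2 * π / (T * |y₀|) := by
  have hπ : (0:ℝ) < π := Real.pi_pos
  set c : ℝ := T / (2 * π) with hcdef
  have hc : 0 < c := by positivity
  have hω : 0 < ω₀ := by rw [hω₀]; positivity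
  have hTc : 2 * π * c = T := by rw [hcdef]; field_simp
  have hy0neg : y₀ < 0 := by
    have h0 : 0 < T / π := by positivity
    have : -T/π < 0 := by rw [neg_div]; linarith
    linarith
  have habs : |y₀| = -y₀ := abs_of_neg hy0neg
  have hy2c : 2 * c ≤ -y₀ := by
    have : T / π ≤ -y₀ := by
      rw [neg_div] at hy₀; linarith
    have h2 : 2 * c = T / π := by rw [hcdef]; field_simp
    linarith [h2 ▸ this]
  have hlogω : Real.log ω₀ - Real.log x = y₀ / c := by
    rw [hω₀, Real.log_mul (Real.exp_ne_zero _) hx.ne', Real.log_exp]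
    have : 2 * π / T * y₀ = y₀ / c := by
      rw [hcdef]; field_simp
    linarith [this]
  have hfirst : (T / (2 * π)) * Real.log (ω₀ / x) = y₀ := by
    rw [Real.log_div hω.ne' hx.ne', ← hcdef, hlogω]
    field_simp
  -- a := log x - log ω₀ ≥ 2
  have ha2 : 2 ≤ Real.log x - Real.log ω₀ := by
    have hxω : Real.log x - Real.log ω₀ = -y₀ / c := by
      rw [neg_div]; linarith [hlogω]
    rw [hxω, le_div_iff₀ hc]
    linarith
  have hy0' : (0:ℝ) < -y₀ := by linarith
  have hrhs : 2 * π / (T * |y₀|) = 1 / (c^2 * (Real.log x - Real.log ω₀)) := by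
    have hxω : Real.log x - Real.log ω₀ = -y₀ / c := by
      rw [neg_div]; linarith [hlogω]
    have hden : c^2 * (-y₀ / c) = c * -y₀ := by
      field_simp
    rw [habs, hxω, hden, ← hTc]
    rw [div_eq_div_iff (by positivity : 2*π*c*(-y₀) ≠ 0) (by positivity : c*(-y₀) ≠ 0)]
    ring
  rw [hfirst]
  by_cases hN0 : ⌊ω₀⌋₊ = 0
  · rw [hN0]
    have hω1 : ω₀ < 1 := by
      by_contra hcon
      push_neg at hcon
      have := Nat.floor_pos.mpr hcon
      omega
    rw [Int.fract_eq_self.mpr ⟨hω.le, hω1⟩, div_self hω.ne']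
    simp only [Finset.Icc_eq_empty (by omega : ¬ (1:ℕ) ≤ 0), Finset.sum_empty, add_zero]
    rw [hrhs]
    have h1 : c ≤ -y₀ := by linarith
    have ha0 : 0 < Real.log x - Real.log ω₀ := by linarith
    have hy2pos : (0:ℝ) < y₀^2 := by nlinarith
    rw [div_le_div_iff₀ hy2pos (mul_pos (by positivity) ha0)]
    have hxω : Real.log x - Real.log ω₀ = -y₀ / c := by
      rw [neg_div]; linarith [hlogω]
    rw [hxω]
    rw [show (1:ℝ) * (c^2 * (-y₀/c)) = c * (-y₀) by field_simp]
    nlinarith [sq_nonneg y₀]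
  · -- N ≥ 1
    set N : ℕ := ⌊ω₀⌋₊ with hNdef
    have hN1 : 1 ≤ N := Nat.one_le_iff_ne_zero.mpr hN0
    have hNle : (N:ℝ) ≤ ω₀ := Nat.floor_le hω.le
    have hNpos : (0:ℝ) < (N:ℝ) := by exact_mod_cast Nat.pos_of_ne_zero hN0
    have hfract : Int.fract ω₀ = ω₀ - (N:ℝ) := by
      rw [Int.fract]
      congr 1
      rw [hNdef]
      exact (natCast_floor_eq_intCast_floor hω.le).symm ▸ rfl
    have hlogNω : Real.log (N:ℝ) ≤ Real.log ω₀ := Real.log_le_log hNpos hNle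
    have hlogxN : 2 ≤ Real.log x - Real.log (N:ℝ) := by linarith
    -- transform the sum
    have hsum_eq : ∑ n ∈ Finset.Icc 1 N, (1 / (n : ℝ)) / ((T / (2 * π)) * Real.log ((n : ℝ) / x)) ^ 2
        = ∑ n ∈ Finset.Icc 1 N, (1/(n:ℝ))/(c^2*(Real.log x - Real.log (n:ℝ))^2) := by
      apply Finset.sum_congr rfl
      intro n hn
      have hn1 : 1 ≤ n := (Finset.mem_Icc.mp hn).1
      have hnpos : (0:ℝ) < (n:ℝ) := by exact_mod_cast hn1
      rw [Real.log_div hnpos.ne' hx.ne', ← hcdef]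
      congr 1
      ring
    rw [hsum_eq]
    have hsum := my_sum x c hc N hN1 hlogxN
    -- fract term bound
    set a : ℝ := Real.log x - Real.log ω₀ with hadef
    set B : ℝ := Real.log x - Real.log (N:ℝ) with hBdef
    have ha0 : 0 < a := by linarith
    have hB0 : 0 < B := by linarith
    have hkey := my_key a (Real.log ω₀ - Real.log (N:ℝ)) (N:ℝ) ω₀ hNpos hNle ha2
      (my_log_ge (N:ℝ) ω₀ hNpos hNle)
    have hABe : a + (Real.log ω₀ - Real.log (N:ℝ)) = B := by rw [hadef, hBdef]; ring
    rw [hABe] at hkey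
    -- hkey : (ω₀ - N)/(ω₀ * a^2) ≤ 1/a - 1/B
    have hy2 : y₀^2 = c^2 * a^2 := by
      have hxω : a = -y₀ / c := by
        rw [hadef, neg_div]; linarith [hlogω]
      rw [hxω]
      field_simp
    have hfirstterm : Int.fract ω₀ / ω₀ / y₀ ^ 2 ≤ 1/(c^2*a) - 1/(c^2*B) := by
      rw [hfract, hy2]
      have e1 : (ω₀ - (N:ℝ)) / ω₀ / (c^2 * a^2) = 1/c^2 * ((ω₀ - (N:ℝ))/(ω₀ * a^2)) := by
        rw [div_div, div_mul_div_comm, one_mul]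
        congr 1
        ring
      have e2 : 1/c^2 * (1/a - 1/B) = 1/(c^2*a) - 1/(c^2*B) := by
        field_simp
      rw [e1, ← e2]
      exact mul_le_mul_of_nonneg_left hkey (by positivity)
    rw [hrhs]
    calc Int.fract ω₀ / ω₀ / y₀ ^ 2 + ∑ n ∈ Finset.Icc 1 N, (1/(n:ℝ))/(c^2*(Real.log x - Real.log (n:ℝ))^2)
        ≤ (1/(c^2*a) - 1/(c^2*B)) + 1/(c^2*B) := add_le_add hfirstterm hsum
      _ = 1/(c^2*a) := by ring
end

section
/- Let λ ∈ ℝ with λ ≠ 0. Then: (i) Φ_λ(2n+1) = 0 for every integer n; (ii) for ξ ∈ {1, −1} and every real t, |Φ_λ(ξ + i t)| ≤ (π/8)·|t|; and (iii) for every real c > −λ/(2π), the function Φ_λ is bounded on the half-plane {z ∈ ℂ : Im z ≥ c}. -/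
open Real


lemma tanh_lipschitz : LipschitzWith 1 Real.tanh := by
  have hd : ∀ x : ℝ, HasDerivAt Real.tanh (1 / Real.cosh x ^ 2) x := by
    intro x
    have h := (Real.hasDerivAt_sinh x).div (Real.hasDerivAt_cosh x) (Real.cosh_pos x).ne'
    have e : Real.tanh = fun y => Real.sinh y / Real.cosh y :=
      funext fun y => Real.tanh_eq_sinh_div_cosh y
    rw [e]
    have h2 : Real.cosh x * Real.cosh x - Real.sinh x * Real.sinh x = 1 := by
      nlinarith [Real.cosh_sq_sub_sinh_sq x]
    rw [h2] at h
    exact h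
  refine lipschitzWith_of_nnnorm_deriv_le (fun x => (hd x).differentiableAt) (fun x => ?_)
  rw [(hd x).deriv]
  have h1 : (1:ℝ) ≤ Real.cosh x ^ 2 := by nlinarith [Real.one_le_cosh x]
  have : ‖1 / Real.cosh x ^ 2‖ ≤ 1 := by
    rw [Real.norm_eq_abs, abs_div, abs_of_nonneg (by positivity : (0:ℝ) ≤ Real.cosh x ^ 2)]
    simp only [abs_one]
    rw [div_le_one (by positivity)]
    exact h1
  exact_mod_cast this

lemma abs_tanh_le (x : ℝ) : |Real.tanh x| ≤ 1 := by
  rw [Real.tanh_eq_sinh_div_cosh, abs_div, abs_of_pos (Real.cosh_pos x),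
    div_le_one (Real.cosh_pos x)]
  nlinarith [Real.cosh_sq_sub_sinh_sq x, abs_nonneg (Real.sinh x), sq_abs (Real.sinh x),
    Real.cosh_pos x]

lemma coth_odd (a : ℂ) (k : ℤ) :
    Complex.cosh (a + (((2 * k + 1 : ℤ) * π / 2 : ℝ) : ℂ) * Complex.I) /
      Complex.sinh (a + (((2 * k + 1 : ℤ) * π / 2 : ℝ) : ℂ) * Complex.I) = Complex.tanh a := by
  set θ : ℂ := (((2 * k + 1 : ℤ) * π / 2 : ℝ) : ℂ) with hθ
  have hcos : Complex.cos θ = 0 := by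
    apply Complex.cos_eq_zero_iff.mpr
    exact ⟨k, by rw [hθ]; push_cast; ring⟩
  have hsin : Complex.sin θ ≠ 0 := by
    intro h
    rcases Complex.sin_eq_zero_iff.mp h with ⟨m, hm⟩
    rw [hθ] at hm
    have hm' : ((2 * k + 1 : ℤ) * π / 2 : ℝ) = m * π := by exact_mod_cast hm
    have : (2 * k + 1 : ℝ) = 2 * m := by
      field_simp at hm'
      push_cast at hm'
      nlinarith [Real.pi_pos, hm']
    have : (2 * k + 1 : ℤ) = 2 * m := by exact_mod_cast this
    omega
  rw [Complex.cosh_add, Complex.sinh_add, Complex.cosh_mul_I, Complex.sinh_mul_I, hcos]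
  simp only [mul_zero, zero_add]
  rw [mul_div_mul_right _ _ (mul_ne_zero hsin Complex.I_ne_zero),
    Complex.tanh_eq_sinh_div_cosh]

/-- The function `Φ_λ(z) = (sgn(λ)/4)·(coth(−iπz/2 + λ/4) − tanh(λ/4))`. -/
noncomputable def PhiCL (lam : ℝ) (z : ℂ) : ℂ :=
  ((Real.sign lam : ℂ) / 4) *
    (Complex.cosh (-Complex.I * (π : ℂ) * z / 2 + (lam : ℂ) / 4) /
        Complex.sinh (-Complex.I * (π : ℂ) * z / 2 + (lam : ℂ) / 4)
      - Complex.tanh ((lam : ℂ) / 4))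

/-- Properties of `Φ_λ` for `λ ≠ 0`: (i) its zeros are at the odd integers;
(ii) `|Φ_λ(±1 + it)| ≤ (π/8)|t|` for real `t`; (iii) for every `c > −λ/(2π)`,
`Φ_λ` is bounded on the half-plane `{Im z ≥ c}`. -/
theorem PhiCL_properties (lam : ℝ) (hlam : lam ≠ 0) :
    (∀ n : ℤ, PhiCL lam ((2 * n + 1 : ℤ) : ℂ) = 0) ∧
    (∀ ξ : ℂ, (ξ = 1 ∨ ξ = -1) → ∀ t : ℝ,
      ‖PhiCL lam (ξ + Complex.I * (t : ℂ))‖ ≤ (π / 8) * |t|) ∧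
    (∀ c : ℝ, -lam / (2 * π) < c →
      ∃ B : ℝ, ∀ z : ℂ, c ≤ z.im → ‖PhiCL lam z‖ ≤ B) := by
  have hπ := Real.pi_pos
  have hs : |Real.sign lam| = 1 := by
    rcases hlam.lt_or_gt with h | h
    · rw [Real.sign_of_neg h]; norm_num
    · rw [Real.sign_of_pos h]; norm_num
  refine ⟨?_, ?_, ?_⟩
  · -- (i)
    intro n
    have h1 : -Complex.I * (π:ℂ) * ((2*n+1 : ℤ):ℂ)/2 + (lam:ℂ)/4
        = (lam:ℂ)/4 + (((2*(-n-1)+1 : ℤ) * π / 2 : ℝ):ℂ) * Complex.I := by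
      push_cast; ring
    rw [PhiCL, h1, coth_odd, sub_self, mul_zero]
  · -- (ii)
    intro ξ hξ t
    obtain ⟨k, hk⟩ : ∃ k : ℤ, -Complex.I * (π:ℂ) * (ξ + Complex.I * (t:ℂ))/2 + (lam:ℂ)/4
        = ((π*t/2 + lam/4 : ℝ):ℂ) + (((2*k+1 : ℤ)*π/2 : ℝ):ℂ) * Complex.I := by
      rcases hξ with h | h <;> subst h
      · exact ⟨-1, by push_cast; linear_combination (-(π:ℂ)*t/2) * Complex.I_sq⟩
      · exact ⟨0, by push_cast; linear_combination (-(π:ℂ)*t/2) * Complex.I_sq⟩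
    rw [PhiCL, hk, coth_odd]
    have e1 : Complex.tanh (((π*t/2 + lam/4 : ℝ):ℂ)) = ((Real.tanh (π*t/2+lam/4) : ℝ):ℂ) :=
      (Complex.ofReal_tanh _).symm
    have e2 : Complex.tanh ((lam:ℂ)/4) = ((Real.tanh (lam/4) : ℝ):ℂ) := by
      rw [show ((lam:ℂ)/4) = ((lam/4:ℝ):ℂ) by push_cast; ring, ← Complex.ofReal_tanh]
    rw [e1, e2]
    have e3 : ((Real.sign lam : ℂ))/4 * (((Real.tanh (π*t/2+lam/4):ℝ):ℂ)
          - ((Real.tanh (lam/4):ℝ):ℂ))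
        = (((Real.sign lam /4 * (Real.tanh (π*t/2+lam/4) - Real.tanh (lam/4))) : ℝ) : ℂ) := by
      push_cast; ring
    rw [e3, Complex.norm_real, Real.norm_eq_abs, abs_mul, abs_div, hs, abs_of_nonneg (by norm_num : (0:ℝ) ≤ 4)]
    have hlip := tanh_lipschitz.dist_le_mul (π*t/2+lam/4) (lam/4)
    rw [Real.dist_eq, Real.dist_eq] at hlip
    have harg : (π*t/2+lam/4) - lam/4 = π*t/2 := by ring
    rw [harg] at hlip
    simp only [NNReal.coe_one, one_mul] at hlip
    calc 1/4 * |Real.tanh (π*t/2+lam/4) - Real.tanh (lam/4)| ≤ 1/4 * |π*t/2| := by linarith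
      _ = π/8 * |t| := by
            rw [abs_div, abs_mul, abs_of_pos hπ]
            norm_num
            ring
  · -- (iii)
    intro c hc
    have hδ : 0 < π * c / 2 + lam / 4 := by
      have h2 : -lam < c * (2 * π) := (div_lt_iff₀ (by positivity)).mp hc
      nlinarith
    set δ : ℝ := π * c / 2 + lam / 4 with hδdef
    set X : ℝ := Real.exp (2*δ) with hXdef
    have hX : 1 < X := by
      rw [hXdef, ← Real.exp_zero]
      exact Real.exp_lt_exp.mpr (by positivity)
    refine ⟨(1/4) * ((X+1)/(X-1) + 1), fun z hz => ?_⟩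
    set w : ℂ := -Complex.I * (π:ℂ) * z / 2 + (lam:ℂ)/4 with hwdef
    have hrw : w.re = π * z.im / 2 + lam / 4 := by
      rw [hwdef]; simp [Complex.div_re]
    have hre : δ ≤ w.re := by
      rw [hrw, hδdef]
      nlinarith
    set u : ℂ := Complex.exp (2*w) with hudef
    have hu : X ≤ ‖u‖ := by
      rw [hudef, Complex.norm_exp, hXdef]
      apply Real.exp_le_exp.mpr
      have : (2*w).re = 2 * w.re := by simp [Complex.mul_re]
      rw [this]; linarith
    have hune : u - 1 ≠ 0 := by
      intro h
      have : u = 1 := by linear_combination h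
      rw [this, norm_one] at hu
      linarith
    have key : Complex.cosh w / Complex.sinh w = (u + 1)/(u - 1) := by
      have hE := Complex.exp_ne_zero w
      have hu2 : u = Complex.exp w * Complex.exp w := by
        rw [hudef, two_mul, Complex.exp_add]
      have hEE : Complex.exp w * Complex.exp w - 1 ≠ 0 := by
        rw [hu2] at hune; exact hune
      have h3 : Complex.exp w - (Complex.exp w)⁻¹ ≠ 0 := by
        rw [sub_ne_zero]
        intro h
        apply hEE
        nth_rewrite 2 [h]
        rw [mul_inv_cancel₀ hE, sub_self]
      rw [Complex.cosh, Complex.sinh, Complex.exp_neg, hu2]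
      rw [div_eq_div_iff (div_ne_zero h3 (by norm_num : (2:ℂ) ≠ 0)) hEE]
      field_simp
    have habs : ‖(u+1)/(u-1)‖ ≤ (X+1)/(X-1) := by
      rw [norm_div]
      have h1 : ‖u+1‖ ≤ ‖u‖ + 1 := by
        simpa using norm_add_le u 1
      have h2 : ‖u‖ - 1 ≤ ‖u-1‖ := by
        simpa using norm_sub_norm_le u 1
      have hpos : 0 < ‖u‖ - 1 := by linarith
      calc ‖u+1‖ / ‖u-1‖
          ≤ (‖u‖ + 1) / (‖u‖ - 1) := by
            apply div_le_div₀ (by positivity) h1 hpos h2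
        _ ≤ (X+1)/(X-1) := by
            rw [div_le_div_iff₀ hpos (by linarith)]
            nlinarith
    have htanh : ‖Complex.tanh ((lam:ℂ)/4)‖ ≤ 1 := by
      have : ((lam:ℂ)/4) = ((lam/4 : ℝ) : ℂ) := by push_cast; ring
      rw [this, ← Complex.ofReal_tanh, Complex.norm_real, Real.norm_eq_abs]
      exact abs_tanh_le _
    rw [PhiCL, ← hwdef, key, norm_mul]
    have h4 : ‖(Real.sign lam : ℂ)/4‖ = 1/4 := by
      rw [norm_div, Complex.norm_real, Real.norm_eq_abs, hs]
      norm_num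
    rw [h4]
    have htri : ‖(u+1)/(u-1) - Complex.tanh ((lam:ℂ)/4)‖
        ≤ ‖(u+1)/(u-1)‖ + ‖Complex.tanh ((lam:ℂ)/4)‖ := by
      simpa [sub_eq_add_neg] using norm_add_le ((u+1)/(u-1)) (-Complex.tanh ((lam:ℂ)/4))
    have : ‖(u+1)/(u-1) - Complex.tanh ((lam:ℂ)/4)‖ ≤ (X+1)/(X-1) + 1 := by
      linarith
    linarith
end

section
/- For every real x > 0, R(x) = Σ_{1 ≤ k ≤ x} M(√(x/k)) − ∫₀^x M(√(x/u)) du, where the sum runs over positive integers k ≤ x. -/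
open Real

/-- `M(x) = ∑_{1 ≤ n ≤ x} μ(n)`. -/
noncomputable def Mf (x : ℝ) : ℝ :=
  ∑ n ∈ Finset.Icc 1 ⌊x⌋₊, (ArithmeticFunction.moebius n : ℝ)

/-- `Q(x)`: the number of squarefree positive integers `n ≤ x`. -/
noncomputable def Qf (x : ℝ) : ℕ :=
  Set.ncard {n : ℕ | Squarefree n ∧ (n : ℝ) ≤ x}

/-- `R(x) = Q(x) − (6/π²)·x`. -/
noncomputable def Rf (x : ℝ) : ℝ := (Qf x : ℝ) - (6 / π ^ 2) * x

open ArithmeticFunction MeasureTheory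
open scoped ENNReal NNReal

lemma tsum_moebius_div_sq : ∑' d : ℕ, (moebius d : ℝ) / (d:ℝ)^2 = 6 / π ^ 2 := by
  have hpi : (π:ℂ) ≠ 0 := by exact_mod_cast Real.pi_ne_zero
  have hone : LSeries 1 2 = (π:ℂ)^2/6 := by
    rw [LSeries_one_eq_riemannZeta (by norm_num), riemannZeta_two]
  have hmul : LSeries 1 2 * LSeries (fun n => ((moebius n : ℤ) : ℂ)) 2 = 1 :=
    LSeries_one_mul_Lseries_moebius (by norm_num)
  have hμ : LSeries (fun n => ((moebius n : ℤ) : ℂ)) 2 = 6 / (π:ℂ)^2 := by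
    rw [hone] at hmul
    field_simp at hmul ⊢
    linear_combination hmul
  have hterm : ∀ d : ℕ, ((((moebius d : ℝ) / (d:ℝ)^2 : ℝ)) : ℂ)
      = LSeries.term (fun n => ((moebius n : ℤ) : ℂ)) 2 d := by
    intro d
    rcases eq_or_ne d 0 with rfl | hd
    · simp
    · rw [LSeries.term_of_ne_zero hd]
      push_cast
      rw [Complex.cpow_ofNat]
  have : ((∑' d : ℕ, (moebius d : ℝ) / (d:ℝ)^2 : ℝ) : ℂ) = ((6 / π^2 : ℝ) : ℂ) := by
    rw [Complex.ofReal_tsum]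
    simp_rw [hterm]
    rw [← LSeries, hμ]
    push_cast
    ring
  exact_mod_cast this


lemma squarefree_prod_distinct_primes {s : Finset ℕ} (hs : ∀ p ∈ s, p.Prime) :
    Squarefree (∏ p ∈ s, p) := by
  have hne : ∏ p ∈ s, p ≠ 0 := Finset.prod_ne_zero_iff.2 fun p hp => (hs p hp).ne_zero
  rw [Nat.squarefree_iff_factorization_le_one hne]
  intro p
  rw [Nat.factorization_prod fun q hq => (hs q hq).ne_zero]
  simp only [Finset.sum_apply']
  calc ∑ q ∈ s, (Nat.factorization q) p ≤ ∑ q ∈ s, if q = p then 1 else 0 := by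
        refine Finset.sum_le_sum fun q hq => ?_
        rw [(hs q hq).factorization]
        exact le_of_eq Finsupp.single_apply
    _ ≤ 1 := by rw [Finset.sum_ite_eq' s p (fun _ => 1)]; split <;> simp

lemma sum_sq_dvd_moebius (n : ℕ) (hn : 1 ≤ n) :
    ∑ d ∈ Finset.Icc 1 n, (if d^2 ∣ n then (moebius d : ℤ) else 0)
      = if Squarefree n then 1 else 0 := by
  classical
  set s := n.primeFactors.filter (fun p => p^2 ∣ n) with hs
  have hsp : ∀ p ∈ s, p.Prime := fun p hp =>
    Nat.prime_of_mem_primeFactors (Finset.mem_filter.mp hp).1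
  set m := ∏ p ∈ s, p with hm
  have hn0 : n ≠ 0 := by omega
  have hmsf : Squarefree m := squarefree_prod_distinct_primes hsp
  have hm0 : m ≠ 0 := hmsf.ne_zero
  have hm2 : m^2 ∣ n := by
    rw [hm, ← Finset.prod_pow]
    apply Finset.prod_dvd_of_isRelPrime
    · intro p hp q hq hpq
      simp only [Function.onFun]
      intro d hd1 hd2
      have hco : Nat.Coprime (p^2) (q^2) :=
        Nat.Coprime.pow 2 2 ((Nat.coprime_primes (hsp p hp) (hsp q hq)).mpr hpq)
      have : d ∣ 1 := hco ▸ Nat.dvd_gcd hd1 hd2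
      exact isUnit_of_dvd_one this
    · intro p hp
      exact (Finset.mem_filter.mp hp).2
  have hmn : m ≤ n := Nat.le_of_dvd (by omega) ((dvd_pow_self m two_ne_zero).trans hm2)
  have hkey : ∀ d : ℕ, Squarefree d → (d^2 ∣ n ↔ d ∣ m) := by
    intro d hd
    constructor
    · intro hdn
      rw [← Nat.prod_primeFactors_of_squarefree hd]
      apply Finset.prod_dvd_prod_of_subset _ _ _ ?_
      intro p hp
      have hpp := Nat.prime_of_mem_primeFactors hp
      have hpd : p ∣ d := Nat.dvd_of_mem_primeFactors hp
      refine Finset.mem_filter.mpr ⟨Nat.mem_primeFactors.mpr ⟨hpp, ?_, hn0⟩, ?_⟩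
      · exact hpd.trans ((dvd_pow_self d two_ne_zero).trans hdn)
      · exact (pow_dvd_pow_of_dvd hpd 2).trans hdn
    · intro hdm
      exact (pow_dvd_pow_of_dvd hdm 2).trans hm2
  have h1 : ∑ d ∈ Finset.Icc 1 n, (if d^2 ∣ n then (moebius d : ℤ) else 0)
      = ∑ d ∈ Finset.Icc 1 n, (if d ∣ m then (moebius d : ℤ) else 0) := by
    apply Finset.sum_congr rfl
    intro d _
    by_cases hd : Squarefree d
    · rw [if_congr (hkey d hd) rfl rfl]
    · rw [moebius_eq_zero_of_not_squarefree hd]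
      simp
  have h2 : ∑ d ∈ Finset.Icc 1 n, (if d ∣ m then (moebius d : ℤ) else 0)
      = ∑ d ∈ m.divisors, (moebius d : ℤ) := by
    rw [← Finset.sum_filter]
    apply Finset.sum_congr _ (fun _ _ => rfl)
    ext d
    simp only [Finset.mem_filter, Finset.mem_Icc, Nat.mem_divisors]
    constructor
    · rintro ⟨⟨h1', h2'⟩, h3⟩; exact ⟨h3, hm0⟩
    · rintro ⟨h1', _⟩
      exact ⟨⟨Nat.pos_of_dvd_of_pos h1' (Nat.pos_of_ne_zero hm0),
        le_trans (Nat.le_of_dvd (Nat.pos_of_ne_zero hm0) h1') hmn⟩, h1'⟩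
  have h3 : ∑ d ∈ m.divisors, (moebius d : ℤ) = if m = 1 then 1 else 0 := by
    calc ∑ d ∈ m.divisors, (moebius d : ℤ) = (moebius * (zeta : ArithmeticFunction ℤ)) m := by
          rw [coe_mul_zeta_apply]
      _ = (1 : ArithmeticFunction ℤ) m := by rw [moebius_mul_coe_zeta]
      _ = if m = 1 then 1 else 0 := one_apply
  have h4 : m = 1 ↔ Squarefree n := by
    constructor
    · intro h1'
      rw [Nat.squarefree_iff_prime_squarefree]
      intro p hp hpn
      have hp' : p.Prime := hp
      have hps : p ∈ s := Finset.mem_filter.mpr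
        ⟨Nat.mem_primeFactors.mpr ⟨hp', (dvd_mul_right p p).trans hpn, hn0⟩,
         by rwa [sq]⟩
      have hdvd : p ∣ m := Finset.dvd_prod_of_mem (fun p => p) hps
      rw [h1'] at hdvd
      exact hp'.one_lt.ne' (Nat.eq_one_of_dvd_one hdvd)
    · intro hsf
      have hse : s = ∅ := by
        rw [Finset.eq_empty_iff_forall_notMem]
        intro p hp
        obtain ⟨hp1, hp2⟩ := Finset.mem_filter.mp hp
        exact Nat.squarefree_iff_prime_squarefree.mp hsf p
          (Nat.prime_of_mem_primeFactors hp1) (by rwa [← sq])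
      rw [hm, hse, Finset.prod_empty]
  rw [h1, h2, h3, if_congr h4 rfl rfl]

-- floor characterization
lemma mem_iff_aux {x : ℝ} (hx : 0 < x) {k d : ℕ} (hk : 1 ≤ k) (hd : 1 ≤ d) :
    (d : ℝ) ≤ Real.sqrt (x / k) ↔ d^2 * k ≤ ⌊x⌋₊ := by
  have hk0 : (0:ℝ) < k := by exact_mod_cast hk
  rw [Real.le_sqrt (by positivity) (by positivity), le_div_iff₀ hk0]
  rw [show ((d:ℝ)^2 * k : ℝ) = ((d^2 * k : ℕ) : ℝ) by push_cast; ring]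
  exact (Nat.le_floor_iff hx.le).symm

lemma Mf_sqrt_eq (x : ℝ) (hx : 0 < x) (k : ℕ) (hk : k ∈ Finset.Icc 1 ⌊x⌋₊) :
    Mf (Real.sqrt (x / k)) = ∑ d ∈ Finset.Icc 1 ⌊x⌋₊,
      (if d^2 * k ≤ ⌊x⌋₊ then (moebius d : ℝ) else 0) := by
  obtain ⟨hk1, hk2⟩ := Finset.mem_Icc.mp hk
  rw [Mf, ← Finset.sum_filter]
  apply Finset.sum_congr _ (fun _ _ => rfl)
  ext d
  simp only [Finset.mem_filter, Finset.mem_Icc]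
  constructor
  · rintro ⟨h1, h2⟩
    have hd : 1 ≤ d := h1
    have := (Nat.le_floor_iff (Real.sqrt_nonneg _)).mp h2
    refine ⟨⟨h1, ?_⟩, (mem_iff_aux hx hk1 hd).mp this⟩
    have h3 : d^2 * k ≤ ⌊x⌋₊ := (mem_iff_aux hx hk1 hd).mp this
    calc d ≤ d^2 * k := by nlinarith
      _ ≤ ⌊x⌋₊ := h3
  · rintro ⟨⟨h1, h2⟩, h3⟩
    exact ⟨h1, Nat.le_floor ((mem_iff_aux hx hk1 h1).mpr h3)⟩

lemma sum_Mf_eq (x : ℝ) (hx : 0 < x) :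
    ∑ k ∈ Finset.Icc 1 ⌊x⌋₊, Mf (Real.sqrt (x / k))
      = ∑ d ∈ Finset.Icc 1 ⌊x⌋₊, (moebius d : ℝ) * (⌊x⌋₊ / d^2 : ℕ) := by
  rw [Finset.sum_congr rfl (Mf_sqrt_eq x hx), Finset.sum_comm]
  apply Finset.sum_congr rfl
  intro d hd
  obtain ⟨hd1, _⟩ := Finset.mem_Icc.mp hd
  have hd2 : 0 < d^2 := by positivity
  rw [← Finset.sum_filter]
  have hset : {k ∈ Finset.Icc 1 ⌊x⌋₊ | d^2 * k ≤ ⌊x⌋₊} = Finset.Icc 1 (⌊x⌋₊ / d^2) := by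
    ext k
    simp only [Finset.mem_filter, Finset.mem_Icc, Nat.le_div_iff_mul_le hd2]
    constructor
    · rintro ⟨⟨h1, h2⟩, h3⟩; exact ⟨h1, by linarith [h3]⟩
    · rintro ⟨h1, h2⟩
      have h2' : d^2 * k ≤ ⌊x⌋₊ := by linarith [h2]
      exact ⟨⟨h1, le_trans (by nlinarith) h2'⟩, h2'⟩
  rw [hset, Finset.sum_const, Nat.card_Icc]
  simp [mul_comm]

lemma card_squarefree_eq (x : ℝ) (hx : 0 < x) :
    ((Finset.Icc 1 ⌊x⌋₊).filter Squarefree).card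
      = ∑ d ∈ Finset.Icc 1 ⌊x⌋₊, (moebius d : ℤ) * (⌊x⌋₊ / d^2 : ℕ) := by
  set N := ⌊x⌋₊ with hN
  have step1 : (((Finset.Icc 1 N).filter Squarefree).card : ℤ)
      = ∑ n ∈ Finset.Icc 1 N, (if Squarefree n then (1:ℤ) else 0) := by
    rw [← Finset.sum_filter]
    simp
  have step2 : ∀ n ∈ Finset.Icc 1 N, (if Squarefree n then (1:ℤ) else 0)
      = ∑ d ∈ Finset.Icc 1 N, (if d^2 ∣ n then (moebius d : ℤ) else 0) := by
    intro n hn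
    obtain ⟨hn1, hn2⟩ := Finset.mem_Icc.mp hn
    rw [← sum_sq_dvd_moebius n hn1]
    apply Finset.sum_subset (Finset.Icc_subset_Icc_right hn2)
    intro d hd hd'
    simp only [Finset.mem_Icc] at hd hd'
    have : ¬ d^2 ∣ n := by
      intro hdvd
      have h1 : d ∣ n := (dvd_pow_self d two_ne_zero).trans hdvd
      have := Nat.le_of_dvd (by omega) h1
      omega
    simp [this]
  rw [step1, Finset.sum_congr rfl step2, Finset.sum_comm]
  apply Finset.sum_congr rfl
  intro d hd
  obtain ⟨hd1, _⟩ := Finset.mem_Icc.mp hd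
  rw [← Finset.sum_filter, Finset.sum_const]
  have : Finset.Icc 1 N = Finset.Ioc 0 N := by
    ext k; simp [Finset.mem_Icc, Finset.mem_Ioc]; omega
  rw [this, Nat.Ioc_filter_dvd_card_eq_div N (d^2)]
  rw [nsmul_eq_mul, mul_comm]


lemma Qf_eq_card (x : ℝ) (hx : 0 ≤ x) :
    Qf x = ((Finset.Icc 1 ⌊x⌋₊).filter Squarefree).card := by
  rw [Qf]
  have hset : {n : ℕ | Squarefree n ∧ (n : ℝ) ≤ x}
      = ↑((Finset.Icc 1 ⌊x⌋₊).filter Squarefree) := by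
    ext n
    simp only [Set.mem_setOf_eq, Finset.coe_filter, Finset.mem_Icc, Set.mem_setOf_eq,
      Nat.le_floor_iff hx]
    constructor
    · rintro ⟨h1, h2⟩
      exact ⟨⟨Nat.one_le_iff_ne_zero.mpr h1.ne_zero, h2⟩, h1⟩
    · rintro ⟨⟨_, h2⟩, h3⟩
      exact ⟨h3, h2⟩
  rw [hset, Set.ncard_coe_finset]

lemma integral_Mf (x : ℝ) (hx : 0 < x) :
    ∫ u in (0:ℝ)..x, Mf (Real.sqrt (x / u)) = 6 / π ^ 2 * x := by
  classical
  set F : ℕ → ℝ → ℝ := fun d u =>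
    Set.indicator (Set.Ioc 0 (x / (d:ℝ)^2)) (fun _ => (moebius d : ℝ)) u with hF
  have hF0 : F 0 = 0 := by
    ext u
    simp [hF, Set.indicator_apply]
  -- pointwise identity on Ioc 0 x
  have hpt : ∀ u ∈ Set.Ioc (0:ℝ) x, Mf (Real.sqrt (x / u)) = ∑' d, F d u := by
    rintro u ⟨hu0, hux⟩
    have hiff : ∀ d : ℕ, 1 ≤ d → ((d:ℝ) ≤ Real.sqrt (x/u) ↔ u ≤ x / (d:ℝ)^2) := by
      intro d hd
      have hd0 : (0:ℝ) < (d:ℝ) := by exact_mod_cast hd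
      rw [Real.le_sqrt (by positivity) (by positivity), le_div_iff₀ hu0,
        le_div_iff₀ (by positivity), mul_comm]
    rw [Mf, tsum_eq_sum (s := Finset.Icc 1 ⌊Real.sqrt (x/u)⌋₊) ?_]
    · apply Finset.sum_congr rfl
      intro d hd
      obtain ⟨hd1, hd2⟩ := Finset.mem_Icc.mp hd
      have : u ∈ Set.Ioc 0 (x / (d:ℝ)^2) :=
        ⟨hu0, (hiff d hd1).mp ((Nat.le_floor_iff (Real.sqrt_nonneg _)).mp hd2)⟩
      simp [hF, Set.indicator_of_mem this]
    · intro d hd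
      rcases Nat.eq_zero_or_pos d with rfl | hd1
      · simp [hF0]
      · have : ¬ u ≤ x / (d:ℝ)^2 := by
          intro h
          exact hd (Finset.mem_Icc.mpr ⟨hd1, Nat.le_floor ((hiff d hd1).mpr h)⟩)
        simp [hF, Set.indicator_apply, Set.mem_Ioc, this]
  -- each F d is integrable / measurable
  have hmeas : ∀ d : ℕ, AEStronglyMeasurable (F d) (volume.restrict (Set.Ioc 0 x)) := by
    intro d
    exact ((measurable_const.indicator measurableSet_Ioc).aestronglyMeasurable)
  -- bound on lintegrals
  have hsub : ∀ d : ℕ, 1 ≤ d → Set.Ioc (0:ℝ) (x / (d:ℝ)^2) ⊆ Set.Ioc 0 x := by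
    intro d hd
    apply Set.Ioc_subset_Ioc_right
    have hd0 : (1:ℝ) ≤ (d:ℝ) := by exact_mod_cast hd
    rw [div_le_iff₀ (by positivity)]
    have h1 : (1:ℝ) ≤ (d:ℝ)^2 := one_le_pow₀ hd0
    nlinarith
  have hlin : ∑' d : ℕ, ∫⁻ u, ‖F d u‖₊ ∂(volume.restrict (Set.Ioc 0 x)) ≠ ⊤ := by
    have hbound : ∀ d : ℕ, ∫⁻ u, ‖F d u‖₊ ∂(volume.restrict (Set.Ioc 0 x))
        ≤ ENNReal.ofReal (x / (d:ℝ)^2) := by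
      intro d
      rcases Nat.eq_zero_or_pos d with rfl | hd1
      · simp [hF0]
      · calc ∫⁻ u, ‖F d u‖₊ ∂(volume.restrict (Set.Ioc 0 x))
            ≤ ∫⁻ u, Set.indicator (Set.Ioc 0 (x / (d:ℝ)^2)) (fun _ => (1:ℝ≥0∞)) u
              ∂(volume.restrict (Set.Ioc 0 x)) := by
              apply lintegral_mono
              intro u
              simp only [hF, Set.indicator_apply]
              split
              · have habs : |(moebius d : ℝ)| ≤ 1 := by
                  by_cases hsf : Squarefree d
                  · rw [show ((moebius d : ℝ)) = ((moebius d : ℤ) : ℝ) by norm_num,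
                      ← Int.cast_abs, abs_moebius_eq_one_of_squarefree hsf]
                    norm_num
                  · rw [moebius_eq_zero_of_not_squarefree hsf]
                    norm_num
                have h2 : ‖(moebius d : ℝ)‖₊ ≤ 1 := by
                  rw [← NNReal.coe_le_coe, coe_nnnorm, Real.norm_eq_abs, NNReal.coe_one]
                  exact habs
                exact_mod_cast ENNReal.coe_le_coe.mpr h2
              · simp
        _ = volume (Set.Ioc (0:ℝ) (x / (d:ℝ)^2) ∩ Set.Ioc 0 x) := by
              rw [lintegral_indicator measurableSet_Ioc, setLIntegral_one,
                Measure.restrict_apply measurableSet_Ioc]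
        _ ≤ ENNReal.ofReal (x / (d:ℝ)^2) := by
              rw [Set.inter_eq_left.mpr (hsub d hd1)]
              simp [Real.volume_Ioc]
    refine ne_top_of_le_ne_top ?_ (ENNReal.tsum_le_tsum hbound)
    rw [← ENNReal.ofReal_tsum_of_nonneg (fun d => div_nonneg hx.le (by positivity)) ?_]
    · exact ENNReal.ofReal_ne_top
    · simp_rw [div_eq_mul_inv, ← one_div]
      apply Summable.mul_left
      exact Real.summable_one_div_nat_pow.mpr one_lt_two
  -- apply integral_tsum
  have key : ∫ u in Set.Ioc (0:ℝ) x, Mf (Real.sqrt (x / u))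
      = ∑' d : ℕ, ∫ u in Set.Ioc (0:ℝ) x, F d u := by
    rw [← MeasureTheory.integral_tsum hmeas hlin]
    apply setIntegral_congr_fun measurableSet_Ioc
    intro u hu
    exact hpt u hu
  have hFint : ∀ d : ℕ, ∫ u in Set.Ioc (0:ℝ) x, F d u = (moebius d : ℝ) * (x / (d:ℝ)^2) := by
    intro d
    rcases Nat.eq_zero_or_pos d with rfl | hd1
    · simp [hF0]
    · rw [hF, integral_indicator measurableSet_Ioc, Measure.restrict_restrict measurableSet_Ioc,
        Set.inter_eq_left.mpr (hsub d hd1), setIntegral_const, measureReal_def, Real.volume_Ioc, smul_eq_mul,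
        ENNReal.toReal_ofReal (sub_nonneg.mpr (div_nonneg hx.le (by positivity))), mul_comm]
      congr 1
      ring
  rw [intervalIntegral.integral_of_le hx.le, key]
  simp_rw [hFint]
  have : ∑' d : ℕ, (moebius d : ℝ) * (x / (d:ℝ)^2) = x * ∑' d : ℕ, (moebius d : ℝ) / (d:ℝ)^2 := by
    rw [← tsum_mul_left]
    apply tsum_congr
    intro d
    ring
  rw [this, tsum_moebius_div_sq]
  ring

/-- For every `x > 0`,
`R(x) = ∑_{1 ≤ k ≤ x} M(√(x/k)) − ∫₀^x M(√(x/u)) du`. -/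
theorem Rf_eq_sum_sub_integral (x : ℝ) (hx : 0 < x) :
    Rf x = (∑ k ∈ Finset.Icc 1 ⌊x⌋₊, Mf (Real.sqrt (x / (k : ℝ))))
      - ∫ u in (0:ℝ)..x, Mf (Real.sqrt (x / u)) := by
  have hcard : (((Finset.Icc 1 ⌊x⌋₊).filter Squarefree).card : ℝ)
      = ∑ d ∈ Finset.Icc 1 ⌊x⌋₊, (moebius d : ℝ) * ((⌊x⌋₊ / d^2 : ℕ) : ℝ) := by
    have := congrArg (fun z : ℤ => (z : ℝ)) (card_squarefree_eq x hx)
    push_cast at this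
    push_cast
    convert this using 2
    norm_cast
    rw [Int.cast_mul, Int.cast_natCast]
  rw [Rf, Qf_eq_card x hx.le, integral_Mf x hx, sum_Mf_eq x hx, hcard]
end

section
/- For every real x > 0 and every integer k ≥ 1, |∫_{k−1/2}^{k+1/2} (M(√(x/u)) − M(√(x/k))) du| ≤ (1/2)·#{n squarefree positive integer : √(x/(k+1/2)) < n < √(x/(k−1/2))}. -/
open Real

lemma abs_moebius_le (n : ℕ) : |(ArithmeticFunction.moebius n : ℝ)| ≤ 1 := by
  by_cases h : Squarefree n
  · rw [ArithmeticFunction.moebius_apply_of_squarefree h]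
    push_cast
    rw [abs_pow, abs_neg, abs_one, one_pow]
  · simp [ArithmeticFunction.moebius_eq_zero_of_not_squarefree h]

lemma Mf_sub (a b : ℝ) (hab : a ≤ b) :
    Mf b - Mf a = ∑ n ∈ Finset.Ioc ⌊a⌋₊ ⌊b⌋₊, (ArithmeticFunction.moebius n : ℝ) := by
  unfold Mf
  rw [show (1 : ℕ) = 0 + 1 from rfl, Finset.Icc_add_one_left_eq_Ioc, Finset.Icc_add_one_left_eq_Ioc]
  have h := Finset.sum_Ioc_consecutive (fun n => (ArithmeticFunction.moebius n : ℝ))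
    (Nat.zero_le ⌊a⌋₊) (Nat.floor_mono hab)
  linarith [h]

lemma measurable_Mf : Measurable Mf := by
  have : Mf = (fun n : ℕ => ∑ i ∈ Finset.Icc 1 n, (ArithmeticFunction.moebius i : ℝ)) ∘ Nat.floor := rfl
  rw [this]
  exact measurable_from_nat.comp Nat.measurable_floor

lemma abs_Mf_le (y : ℝ) : |Mf y| ≤ ⌊y⌋₊ := by
  unfold Mf
  calc |∑ n ∈ Finset.Icc 1 ⌊y⌋₊, (ArithmeticFunction.moebius n : ℝ)|
      ≤ ∑ n ∈ Finset.Icc 1 ⌊y⌋₊, |(ArithmeticFunction.moebius n : ℝ)| :=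
        Finset.abs_sum_le_sum_abs _ _
    _ ≤ ∑ n ∈ Finset.Icc 1 ⌊y⌋₊, 1 := Finset.sum_le_sum (fun i _ => abs_moebius_le i)
    _ = (⌊y⌋₊ : ℝ) := by simp

lemma key_bound (a b : ℕ) (T : Set ℕ) (hT : T.Finite)
    (h : ∀ n, a < n → n ≤ b → Squarefree n → n ∈ T) :
    |∑ n ∈ Finset.Ioc a b, (ArithmeticFunction.moebius n : ℝ)| ≤ T.ncard := by
  classical
  calc |∑ n ∈ Finset.Ioc a b, (ArithmeticFunction.moebius n : ℝ)|
      ≤ ∑ n ∈ Finset.Ioc a b, |(ArithmeticFunction.moebius n : ℝ)| :=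
        Finset.abs_sum_le_sum_abs _ _
    _ = ∑ n ∈ (Finset.Ioc a b).filter Squarefree, |(ArithmeticFunction.moebius n : ℝ)| := by
        rw [Finset.sum_filter_of_ne]
        intro n _ hne
        by_contra hsq
        exact hne (by simp [ArithmeticFunction.moebius_eq_zero_of_not_squarefree hsq])
    _ ≤ ∑ n ∈ (Finset.Ioc a b).filter Squarefree, 1 :=
        Finset.sum_le_sum (fun i _ => abs_moebius_le i)
    _ = (((Finset.Ioc a b).filter Squarefree).card : ℝ) := by simp
    _ ≤ (T.ncard : ℝ) := by
        rw [Set.ncard_eq_toFinset_card T hT]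
        have hsub : (Finset.Ioc a b).filter Squarefree ⊆ hT.toFinset := by
          intro n hn
          simp only [Finset.mem_filter, Finset.mem_Ioc] at hn
          rw [Set.Finite.mem_toFinset]
          exact h n hn.1.1 hn.1.2 hn.2
        exact_mod_cast Finset.card_le_card hsub

lemma intInt (x a b : ℝ) (hx : 0 < x) (ha : 0 < a) (hab : a ≤ b) :
    IntervalIntegrable (fun u => Mf (Real.sqrt (x / u))) MeasureTheory.volume a b := by
  rw [intervalIntegrable_iff_integrableOn_Ioc_of_le hab]
  have hmeas : Measurable fun u : ℝ => Mf (Real.sqrt (x / u)) :=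
    measurable_Mf.comp ((measurable_const.div measurable_id).sqrt)
  apply MeasureTheory.Integrable.mono' (MeasureTheory.integrable_const (Real.sqrt (x / a)))
    hmeas.aestronglyMeasurable
  rw [MeasureTheory.ae_restrict_iff' measurableSet_Ioc]
  filter_upwards with u hu
  have hu1 : a < u := hu.1
  have h1 : x / u ≤ x / a := by gcongr
  have h2 : Real.sqrt (x / u) ≤ Real.sqrt (x / a) := Real.sqrt_le_sqrt h1
  calc ‖Mf (Real.sqrt (x / u))‖ ≤ (⌊Real.sqrt (x / u)⌋₊ : ℝ) := abs_Mf_le _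
    _ ≤ Real.sqrt (x / u) := Nat.floor_le (Real.sqrt_nonneg _)
    _ ≤ Real.sqrt (x / a) := h2

/-- For `x > 0` and an integer `k ≥ 1`,
`|∫_{k−1/2}^{k+1/2} (M(√(x/u)) − M(√(x/k))) du|
  ≤ (1/2)·#{n squarefree : √(x/(k+1/2)) < n < √(x/(k−1/2))}`. -/
theorem integral_diff_le_squarefree_count (x : ℝ) (hx : 0 < x) (k : ℕ) (hk : 1 ≤ k) :
    |∫ u in ((k : ℝ) - 1/2)..((k : ℝ) + 1/2),
        (Mf (Real.sqrt (x / u)) - Mf (Real.sqrt (x / (k : ℝ))))|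
      ≤ (1/2) * (Set.ncard {n : ℕ | Squarefree n ∧
          Real.sqrt (x / ((k : ℝ) + 1/2)) < (n : ℝ) ∧
          (n : ℝ) < Real.sqrt (x / ((k : ℝ) - 1/2))} : ℝ) := by
  have hk1 : (1 : ℝ) ≤ (k : ℝ) := by exact_mod_cast hk
  set c : ℝ := (k : ℝ) with hc
  have ha₀ : (0 : ℝ) < c - 1/2 := by linarith
  have hcpos : (0 : ℝ) < c := by linarith
  have hb₀ : (0 : ℝ) < c + 1/2 := by linarith
  set A : ℝ := Real.sqrt (x / (c + 1/2)) with hA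
  set B : ℝ := Real.sqrt (x / (c - 1/2)) with hB
  set m : ℝ := Real.sqrt (x / c) with hm
  set S : Set ℕ := {n : ℕ | Squarefree n ∧ A < (n : ℝ) ∧ (n : ℝ) < B} with hS
  have hSfin : S.Finite := by
    apply Set.Finite.subset (Set.finite_Iio (⌊B⌋₊ + 1))
    intro n hn
    have : (n : ℝ) < B := hn.2.2
    have : n ≤ ⌊B⌋₊ := Nat.le_floor this.le
    exact Set.mem_Iio.mpr (Nat.lt_succ_of_le this)
  have hAm : A < m := by
    apply Real.sqrt_lt_sqrt (by positivity)
    apply div_lt_div_of_pos_left hx hcpos (by linarith)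
  have hmB : m < B := by
    apply Real.sqrt_lt_sqrt (by positivity)
    apply div_lt_div_of_pos_left hx ha₀ (by linarith)
  set T₁ : Set ℕ := {n : ℕ | Squarefree n ∧ m < (n : ℝ) ∧ (n : ℝ) < B} with hT₁
  set T₂ : Set ℕ := {n : ℕ | Squarefree n ∧ A < (n : ℝ) ∧ (n : ℝ) ≤ m} with hT₂
  have hT₁S : T₁ ⊆ S := fun n hn => ⟨hn.1, hAm.trans hn.2.1, hn.2.2⟩
  have hT₂S : T₂ ⊆ S := fun n hn => ⟨hn.1, hn.2.1, lt_of_le_of_lt hn.2.2 hmB⟩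
  have hT₁fin : T₁.Finite := hSfin.subset hT₁S
  have hT₂fin : T₂.Finite := hSfin.subset hT₂S
  have hdisj : Disjoint T₁ T₂ := by
    rw [Set.disjoint_left]
    intro n hn1 hn2
    exact absurd (hn2.2.2) (not_le.mpr hn1.2.1)
  have hcard : (T₁.ncard : ℝ) + T₂.ncard ≤ S.ncard := by
    have h1 : T₁.ncard + T₂.ncard = (T₁ ∪ T₂).ncard :=
      (Set.ncard_union_eq hdisj hT₁fin hT₂fin).symm
    have h2 : (T₁ ∪ T₂).ncard ≤ S.ncard :=
      Set.ncard_le_ncard (Set.union_subset hT₁S hT₂S) hSfin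
    exact_mod_cast h1 ▸ h2
  -- integrability
  have hint1 : IntervalIntegrable (fun u => Mf (Real.sqrt (x / u)) - Mf m)
      MeasureTheory.volume (c - 1/2) c :=
    (intInt x (c - 1/2) c hx ha₀ (by linarith)).sub intervalIntegrable_const
  have hint2 : IntervalIntegrable (fun u => Mf (Real.sqrt (x / u)) - Mf m)
      MeasureTheory.volume c (c + 1/2) :=
    (intInt x c (c + 1/2) hx hcpos (by linarith)).sub intervalIntegrable_const
  have hsplit : (∫ u in (c - 1/2)..(c + 1/2), (Mf (Real.sqrt (x / u)) - Mf m))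
      = (∫ u in (c - 1/2)..c, (Mf (Real.sqrt (x / u)) - Mf m))
        + ∫ u in c..(c + 1/2), (Mf (Real.sqrt (x / u)) - Mf m) :=
    (intervalIntegral.integral_add_adjacent_intervals hint1 hint2).symm
  -- bound on first piece
  have hb1 : ‖∫ u in (c - 1/2)..c, (Mf (Real.sqrt (x / u)) - Mf m)‖
      ≤ (T₁.ncard : ℝ) * |c - (c - 1/2)| := by
    apply intervalIntegral.norm_integral_le_of_norm_le_const
    intro u hu
    rw [Set.uIoc_of_le (by linarith : c - 1/2 ≤ c)] at hu
    have hu1 : c - 1/2 < u := hu.1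
    have hu2 : u ≤ c := hu.2
    have hupos : 0 < u := by linarith
    have hmu : m ≤ Real.sqrt (x / u) := by
      apply Real.sqrt_le_sqrt; gcongr
    have huB : Real.sqrt (x / u) < B := by
      apply Real.sqrt_lt_sqrt (by positivity)
      exact div_lt_div_of_pos_left hx ha₀ hu1
    rw [Real.norm_eq_abs, Mf_sub m (Real.sqrt (x / u)) hmu]
    apply key_bound _ _ T₁ hT₁fin
    intro n hn1 hn2 hsq
    refine ⟨hsq, ?_, ?_⟩
    · have : m < (⌊m⌋₊ : ℝ) + 1 := Nat.lt_floor_add_one m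
      have : m < ((⌊m⌋₊ + 1 : ℕ) : ℝ) := by push_cast; linarith
      calc m < ((⌊m⌋₊ + 1 : ℕ) : ℝ) := this
        _ ≤ (n : ℝ) := by exact_mod_cast hn1
    · calc (n : ℝ) ≤ Real.sqrt (x / u) :=
          (Nat.le_floor_iff (Real.sqrt_nonneg _)).mp hn2
        _ < B := huB
  -- bound on second piece
  have hb2 : ‖∫ u in c..(c + 1/2), (Mf (Real.sqrt (x / u)) - Mf m)‖
      ≤ (T₂.ncard : ℝ) * |c + 1/2 - c| := by
    apply intervalIntegral.norm_integral_le_of_norm_le_const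
    intro u hu
    rw [Set.uIoc_of_le (by linarith : c ≤ c + 1/2)] at hu
    have hu1 : c < u := hu.1
    have hu2 : u ≤ c + 1/2 := hu.2
    have hupos : 0 < u := by linarith
    have hum : Real.sqrt (x / u) ≤ m := by
      apply Real.sqrt_le_sqrt; gcongr
    have hAu : A ≤ Real.sqrt (x / u) := by
      apply Real.sqrt_le_sqrt; gcongr
    rw [Real.norm_eq_abs, ← abs_neg, neg_sub, Mf_sub (Real.sqrt (x / u)) m hum]
    apply key_bound _ _ T₂ hT₂fin
    intro n hn1 hn2 hsq
    refine ⟨hsq, ?_, ?_⟩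
    · have h3 : Real.sqrt (x / u) < ((⌊Real.sqrt (x / u)⌋₊ + 1 : ℕ) : ℝ) := by
        push_cast; exact Nat.lt_floor_add_one _
      calc A ≤ Real.sqrt (x / u) := hAu
        _ < ((⌊Real.sqrt (x / u)⌋₊ + 1 : ℕ) : ℝ) := h3
        _ ≤ (n : ℝ) := by exact_mod_cast hn1
    · exact (Nat.le_floor_iff (Real.sqrt_nonneg _)).mp hn2
  calc |∫ u in (c - 1/2)..(c + 1/2), (Mf (Real.sqrt (x / u)) - Mf m)|
      ≤ |∫ u in (c - 1/2)..c, (Mf (Real.sqrt (x / u)) - Mf m)|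
        + |∫ u in c..(c + 1/2), (Mf (Real.sqrt (x / u)) - Mf m)| := by
        rw [hsplit]; exact abs_add_le _ _
    _ = ‖∫ u in (c - 1/2)..c, (Mf (Real.sqrt (x / u)) - Mf m)‖
        + ‖∫ u in c..(c + 1/2), (Mf (Real.sqrt (x / u)) - Mf m)‖ := by
        rw [Real.norm_eq_abs, Real.norm_eq_abs]
    _ ≤ (T₁.ncard : ℝ) * |c - (c - 1/2)| + (T₂.ncard : ℝ) * |c + 1/2 - c| := by
        exact add_le_add hb1 hb2
    _ = (1/2) * ((T₁.ncard : ℝ) + T₂.ncard) := by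
        rw [show c - (c - 1/2) = 1/2 by ring, show c + 1/2 - c = 1/2 by ring]
        rw [abs_of_pos (by norm_num : (0:ℝ) < 1/2)]; ring
    _ ≤ (1/2) * (S.ncard : ℝ) := by linarith
end
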